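/- Let σ₁, σ₂ : I → V be a Legendre curve frame and let ξ : I → End(V) be smooth with ξ(t) a sum of endomorphisms a ∧ b with a ∈ C(t) and b ∈ C(t)^⊥, for every t ∈ I. If (p₀, p₁) and (q₀, q₁) are linear conserved quantities of d + tξ, then the functions t ↦ B(p₀, q₁(t)) + B(p₁(t), q₀) and t ↦ B(p₁(t), q₁(t)) are constant on I. (Thus all coefficients of the polynomial s ↦ B(p(s), q(s)) are constant, defining the pencil of metrics ( , )ₛ on the space of linear conserved quantities.) -/

import Mathlib

noncomputable section

/-- `V = ℝ⁵`. -/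
abbrev V : Type := Fin 5 → ℝ

/-- The symmetric bilinear form of signature (3,2) on `V`. -/
def bB (x y : V) : ℝ := x 0 * y 0 + x 1 * y 1 + x 2 * y 2 - x 3 * y 3 - x 4 * y 4

/-- The skew-symmetric endomorphism `a ∧ b` of `V`. -/
def wedge (a b : V) : V →L[ℝ] V :=
  LinearMap.toContinuousLinearMap
    { toFun := fun x => bB a x • b - bB b x • a
      map_add' := by
        intro x y
        have h1 : bB a (x + y) = bB a x + bB a y := by simp [bB]; ring
        have h2 : bB b (x + y) = bB b x + bB b y := by simp [bB]; ring
        try dsimp only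
        rw [h1, h2]; module
      map_smul' := by
        intro c x
        have h1 : bB a (c • x) = c * bB a x := by simp [bB]; ring
        have h2 : bB b (c • x) = c * bB b x := by simp [bB]; ring
        try dsimp only
        rw [h1, h2]
        try simp only [RingHom.id_apply]
        module }

/-- Membership in `C(t) = span{σ₁(t), σ₂(t)}`. -/
def memC (σ₁ σ₂ : ℝ → V) (t : ℝ) (x : V) : Prop :=
  ∃ a b : ℝ, x = a • σ₁ t + b • σ₂ t

/-- A Legendre curve frame on an open interval `I`. -/
structure LegendreCurveFrame (I : Set ℝ) (σ₁ σ₂ : ℝ → V) : Prop where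
  isOpen : IsOpen I
  ordConn : I.OrdConnected
  smooth₁ : ContDiffOn ℝ (⊤ : ℕ∞) σ₁ I
  smooth₂ : ContDiffOn ℝ (⊤ : ℕ∞) σ₂ I
  indep : ∀ t ∈ I, ∀ a b : ℝ, a • σ₁ t + b • σ₂ t = 0 → a = 0 ∧ b = 0
  iso₁₁ : ∀ t ∈ I, bB (σ₁ t) (σ₁ t) = 0
  iso₁₂ : ∀ t ∈ I, bB (σ₁ t) (σ₂ t) = 0
  iso₂₂ : ∀ t ∈ I, bB (σ₂ t) (σ₂ t) = 0
  d₁₁ : ∀ t ∈ I, bB (deriv σ₁ t) (σ₁ t) = 0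
  d₁₂ : ∀ t ∈ I, bB (deriv σ₁ t) (σ₂ t) = 0
  d₂₁ : ∀ t ∈ I, bB (deriv σ₂ t) (σ₁ t) = 0
  d₂₂ : ∀ t ∈ I, bB (deriv σ₂ t) (σ₂ t) = 0
  rank3 : ∀ t ∈ I,
    Module.finrank ℝ
      ↥(Submodule.span ℝ ({σ₁ t, σ₂ t, deriv σ₁ t, deriv σ₂ t} : Set V)) = 3

/-- The curve `C` is circular. -/
def Circular (I : Set ℝ) (σ₁ σ₂ : ℝ → V) : Prop :=
  ∃ v : V, v ≠ 0 ∧ ∀ t ∈ I, memC σ₁ σ₂ t v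

/-- `ξ(t)` is a sum of endomorphisms `a ∧ b` with `a ∈ C(t)` and `b ∈ C(t)^⊥`. -/
def PolarForm (I : Set ℝ) (σ₁ σ₂ : ℝ → V) (ξ : ℝ → V →L[ℝ] V) : Prop :=
  ∀ t ∈ I, ∃ b₁ b₂ : V,
    bB b₁ (σ₁ t) = 0 ∧ bB b₁ (σ₂ t) = 0 ∧ bB b₂ (σ₁ t) = 0 ∧ bB b₂ (σ₂ t) = 0 ∧
    ξ t = wedge (σ₁ t) b₁ + wedge (σ₂ t) b₂

/-- `Q` represents the quadratic differential of `ξ`. -/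
def IsQuadDiff (I : Set ℝ) (σ₁ σ₂ : ℝ → V) (ξ : ℝ → V →L[ℝ] V) (Q : ℝ → ℝ) : Prop :=
  ∀ t ∈ I, ∃ a b c d : ℝ,
    ξ t (deriv σ₁ t) = a • σ₁ t + b • σ₂ t ∧
    ξ t (deriv σ₂ t) = c • σ₁ t + d • σ₂ t ∧
    Q t = a + d

/-- `ξ` is a polarisation of the curve `C`. -/
def IsPolarisation (I : Set ℝ) (σ₁ σ₂ : ℝ → V) (ξ : ℝ → V →L[ℝ] V) : Prop :=
  ContDiffOn ℝ (⊤ : ℕ∞) ξ I ∧ PolarForm I σ₁ σ₂ ξ ∧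
  ∃ Q : ℝ → ℝ, IsQuadDiff I σ₁ σ₂ ξ Q ∧ ∃ t ∈ I, Q t ≠ 0

/-- `(p₀, p₁)` is a linear conserved quantity of `d + tξ`. -/
def IsLCQ (I : Set ℝ) (σ₁ σ₂ : ℝ → V) (ξ : ℝ → V →L[ℝ] V) (p₀ : V) (p₁ : ℝ → V) : Prop :=
  ContDiffOn ℝ (⊤ : ℕ∞) p₁ I ∧
  (∀ t ∈ I, memC σ₁ σ₂ t (p₁ t)) ∧
  ∀ t ∈ I, deriv p₁ t + ξ t p₀ = 0


lemma wedge_apply (a b x : V) : wedge a b x = bB a x • b - bB b x • a := rfl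

lemma bB_symm (x y : V) : bB x y = bB y x := by unfold bB; ring

lemma bB_add_left (x y z : V) : bB (x + y) z = bB x z + bB y z := by
  simp [bB]; ring

lemma bB_add_right (x y z : V) : bB x (y + z) = bB x y + bB x z := by
  simp [bB]; ring

lemma bB_sub_left (x y z : V) : bB (x - y) z = bB x z - bB y z := by
  simp [bB]; ring

lemma bB_smul_left (c : ℝ) (x y : V) : bB (c • x) y = c * bB x y := by
  simp [bB]; ring

lemma bB_smul_right (c : ℝ) (x y : V) : bB x (c • y) = c * bB x y := by
  simp [bB]; ring

lemma bB_neg_left (x y : V) : bB (-x) y = -bB x y := by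
  simp [bB]; ring

lemma bB_neg_right (x y : V) : bB x (-y) = -bB x y := by
  simp [bB]; ring

lemma bB_zero_left (y : V) : bB 0 y = 0 := by simp [bB]

lemma bB_zero_right (x : V) : bB x 0 = 0 := by simp [bB]

lemma wedge_skew (a b x y : V) : bB (wedge a b x) y + bB x (wedge a b y) = 0 := by
  simp only [wedge_apply, bB_sub_left, bB_smul_left]
  rw [bB_symm x (bB a y • b - bB b y • a)]
  simp only [bB_sub_left, bB_smul_left]
  rw [bB_symm b x, bB_symm a x, bB_symm b y, bB_symm a y]
  ring

lemma bB_hasDerivAt {f g : ℝ → V} {f' g' : V} {t : ℝ}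
    (hf : HasDerivAt f f' t) (hg : HasDerivAt g g' t) :
    HasDerivAt (fun s => bB (f s) (g s)) (bB f' (g t) + bB (f t) g') t := by
  have hfi : ∀ i, HasDerivAt (fun s => f s i) (f' i) t := fun i => hasDerivAt_pi.mp hf i
  have hgi : ∀ i, HasDerivAt (fun s => g s i) (g' i) t := fun i => hasDerivAt_pi.mp hg i
  have H : HasDerivAt
      (fun s => f s 0 * g s 0 + f s 1 * g s 1 + f s 2 * g s 2 - f s 3 * g s 3 - f s 4 * g s 4)
      ((f' 0 * g t 0 + f t 0 * g' 0 + (f' 1 * g t 1 + f t 1 * g' 1)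
        + (f' 2 * g t 2 + f t 2 * g' 2)) - (f' 3 * g t 3 + f t 3 * g' 3)
        - (f' 4 * g t 4 + f t 4 * g' 4)) t :=
    (((((hfi 0).mul (hgi 0)).add ((hfi 1).mul (hgi 1))).add
      ((hfi 2).mul (hgi 2))).sub ((hfi 3).mul (hgi 3))).sub ((hfi 4).mul (hgi 4))
  have heq : (fun s => bB (f s) (g s)) =
      (fun s => f s 0 * g s 0 + f s 1 * g s 1 + f s 2 * g s 2 - f s 3 * g s 3 - f s 4 * g s 4) :=
    rfl
  rw [heq]
  convert H using 1
  unfold bB; ring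

/-- the coefficients of the polynomial `s ↦ B(p(s), q(s))` are constant on `I`
for any two linear conserved quantities. -/
theorem stmt4 (I : Set ℝ) (σ₁ σ₂ : ℝ → V) (h : LegendreCurveFrame I σ₁ σ₂)
    (ξ : ℝ → V →L[ℝ] V) (hξs : ContDiffOn ℝ (⊤ : ℕ∞) ξ I)
    (hξf : PolarForm I σ₁ σ₂ ξ)
    (p₀ q₀ : V) (p₁ q₁ : ℝ → V)
    (hp : IsLCQ I σ₁ σ₂ ξ p₀ p₁) (hq : IsLCQ I σ₁ σ₂ ξ q₀ q₁) :
    (∀ s ∈ I, ∀ t ∈ I,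
      bB p₀ (q₁ s) + bB (p₁ s) q₀ = bB p₀ (q₁ t) + bB (p₁ t) q₀) ∧
    (∀ s ∈ I, ∀ t ∈ I, bB (p₁ s) (q₁ s) = bB (p₁ t) (q₁ t)) := by
  -- a real-valued function with zero derivative on `I` is constant on `I`
  have hconv : Convex ℝ I := h.ordConn.convex
  have hconst : ∀ f : ℝ → ℝ, (∀ t ∈ I, HasDerivAt f 0 t) →
      ∀ s ∈ I, ∀ t ∈ I, f s = f t := by
    intro f hf s hs t ht
    refine hconv.is_const_of_fderivWithin_eq_zero
      (fun x hx => ((hf x hx).differentiableAt).differentiableWithinAt) ?_ hs ht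
    intro x hx
    have h0 : HasFDerivAt f (0 : ℝ →L[ℝ] ℝ) x := by
      have := hasDerivAt_iff_hasFDerivAt.mp (hf x hx)
      simpa using this
    exact h0.hasFDerivWithinAt.fderivWithin (h.isOpen.uniqueDiffWithinAt hx)
  -- derivatives of p₁ and q₁
  have hp' : ∀ t ∈ I, HasDerivAt p₁ (-(ξ t p₀)) t := by
    intro t ht
    have hd : DifferentiableAt ℝ p₁ t :=
      (hp.1.contDiffAt (h.isOpen.mem_nhds ht)).differentiableAt (by norm_num)
    have := hd.hasDerivAt
    rwa [eq_neg_of_add_eq_zero_left (hp.2.2 t ht)] at this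
  have hq' : ∀ t ∈ I, HasDerivAt q₁ (-(ξ t q₀)) t := by
    intro t ht
    have hd : DifferentiableAt ℝ q₁ t :=
      (hq.1.contDiffAt (h.isOpen.mem_nhds ht)).differentiableAt (by norm_num)
    have := hd.hasDerivAt
    rwa [eq_neg_of_add_eq_zero_left (hq.2.2 t ht)] at this
  -- `ξ t` is skew-symmetric for `bB`
  have hskew : ∀ t ∈ I, ∀ x y : V, bB (ξ t x) y + bB x (ξ t y) = 0 := by
    intro t ht x y
    obtain ⟨b₁, b₂, _, _, _, _, hξ⟩ := hξf t ht
    rw [hξ]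
    simp only [ContinuousLinearMap.add_apply, bB_add_left, bB_add_right]
    have h1 := wedge_skew (σ₁ t) b₁ x y
    have h2 := wedge_skew (σ₂ t) b₂ x y
    linarith
  -- `ξ t r₀` is `bB`-orthogonal to `C(t)`
  have hkey : ∀ t ∈ I, ∀ r₀ x : V, memC σ₁ σ₂ t x → bB (ξ t r₀) x = 0 := by
    intro t ht r₀ x hx
    obtain ⟨α, β, hxe⟩ := hx
    obtain ⟨b₁, b₂, h1, h2, h3, h4, hξ⟩ := hξf t ht
    have h1' : bB (σ₁ t) b₁ = 0 := by rw [bB_symm]; exact h1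
    have h2' : bB (σ₂ t) b₁ = 0 := by rw [bB_symm]; exact h2
    have h3' : bB (σ₁ t) b₂ = 0 := by rw [bB_symm]; exact h3
    have h4' : bB (σ₂ t) b₂ = 0 := by rw [bB_symm]; exact h4
    have h21 : bB (σ₂ t) (σ₁ t) = 0 := by rw [bB_symm]; exact h.iso₁₂ t ht
    rw [hξ, hxe]
    simp only [ContinuousLinearMap.add_apply, wedge_apply, bB_add_left, bB_sub_left,
      bB_smul_left, bB_add_right, bB_smul_right, h1, h2, h3, h4,
      h.iso₁₁ t ht, h.iso₁₂ t ht, h.iso₂₂ t ht, h21]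
    ring
  constructor
  · -- first coefficient
    refine hconst (fun s => bB p₀ (q₁ s) + bB (p₁ s) q₀) ?_
    intro t ht
    have H1 := bB_hasDerivAt (hasDerivAt_const t p₀) (hq' t ht)
    have H2 := bB_hasDerivAt (hp' t ht) (hasDerivAt_const t q₀)
    have H := H1.add H2
    refine H.congr_deriv ?_
    have hs := hskew t ht p₀ q₀
    rw [bB_zero_left, bB_zero_right, bB_neg_left, bB_neg_right]
    linarith
  · -- second coefficient
    refine hconst (fun s => bB (p₁ s) (q₁ s)) ?_
    intro t ht
    have H := bB_hasDerivAt (hp' t ht) (hq' t ht)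
    convert H using 1
    have e1 : bB (ξ t p₀) (q₁ t) = 0 := hkey t ht p₀ (q₁ t) (hq.2.1 t ht)
    have e2 : bB (ξ t q₀) (p₁ t) = 0 := hkey t ht q₀ (p₁ t) (hp.2.1 t ht)
    rw [bB_neg_left, bB_neg_right, e1, bB_symm (p₁ t) (ξ t q₀), e2]
    ring
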